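/- Let P > 0, let l_u : [0,∞) → ℝ be continuous, and let l_d : [0,∞) → ℝ be continuously differentiable with l_d(t) ≠ 0 for all t ≥ 0. Let g be a continuously differentiable solution of g′(t) = −P·g(t)³ + (P/√2)·g(t)² − (l_d′(t)/l_d(t))·g(t) + (l_d′(t)+l_u(t))/(√2·l_d(t)) with g(0) = 1/√2, set A(t) = √P·exp(∫₀ᵗ P·g(s)² ds) and H(t) = A(t) + (1/l_d(t))·∫₀ᵗ l_u(s)·A(s) ds. If lim_{t→∞} g(t) = r for some real r, then the limit lim_{T→∞} (1/(2T)) ∫₀ᵀ H(t)² / (1 + ∫₀ᵗ H(s)² ds) dt exists and equals P·r². (This is the analytic core of the identity Ī_SK(Θ;Y) = P·r_P² for the Schalkwijk–Kailath mutual information rate.) -/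

import Mathlib

/-!
The ODE for `g` says exactly that `ld · (√2 g - 1) · A` is a primitive of `lu · A`; both vanish
at `0` because `g 0 = 1/√2`, so `H = √2 g A`. Since `A' = P g² A`, the derivative of `A²` is
`P H²`, hence `1 + ∫₀ᵗ H² = A(t)² / P` and the integrand `H² / (1 + ∫₀ᵗ H²)` is exactly `2 P g²`.
The claim is then the continuous Cesàro mean of `P g² → P r²`.
-/

open Set Filter Topology MeasureTheory intervalIntegral

theorem ContinuousOn.hasDerivWithinAt_integral_Ici {E : Type*} [NormedAddCommGroup E]
    [NormedSpace ℝ E] [CompleteSpace E] {f : ℝ → E} {a t : ℝ} (hf : ContinuousOn f (Ici a))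
    (ht : a ≤ t) : HasDerivWithinAt (fun u => ∫ x in a..u, f x) (f t) (Ici a) t := by
  have hint : IntervalIntegrable f volume a t :=
    (hf.mono (uIcc_of_le ht ▸ Icc_subset_Ici_self)).intervalIntegrable
  rcases eq_or_lt_of_le ht with rfl | hat
  · exact integral_hasDerivWithinAt_right hint
      ((hf.stronglyMeasurableAtFilter_nhdsWithin measurableSet_Ici a).filter_mono
        (nhdsWithin_mono _ Ioi_subset_Ici_self))
      ((hf a ht).mono Ioi_subset_Ici_self)
  · exact (integral_hasDerivAt_right hint
      ((hf.mono Ioi_subset_Ici_self).stronglyMeasurableAtFilter isOpen_Ioi t hat)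
      (hf.continuousAt (Ici_mem_nhds hat))).hasDerivWithinAt

theorem Filter.Tendsto.cesaro_intervalIntegral {E : Type*} [NormedAddCommGroup E]
    [NormedSpace ℝ E] [CompleteSpace E] {f : ℝ → E} {L : E}
    (hf : ∀ T, 0 ≤ T → IntervalIntegrable f volume 0 T) (h : Tendsto f atTop (𝓝 L)) :
    Tendsto (fun T => T⁻¹ • ∫ t in (0:ℝ)..T, f t) atTop (𝓝 L) := by
  rw [Metric.tendsto_nhds]
  intro ε hε
  obtain ⟨T₀, hT₀⟩ : ∃ T₀, ∀ t ≥ T₀, 0 ≤ t ∧ dist (f t) L ≤ ε / 2 :=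
    ((eventually_ge_atTop 0).and
      (h.eventually (Metric.closedBall_mem_nhds L (half_pos hε)))).exists_forall_of_atTop
  set C := ‖∫ t in (0:ℝ)..T₀, (f t - L)‖
  have hC : Tendsto (fun T : ℝ => T⁻¹ * C) atTop (𝓝 0) := by
    simpa using tendsto_inv_atTop_zero.mul_const C
  have hT₀0 : 0 ≤ T₀ := (hT₀ T₀ le_rfl).1
  filter_upwards [eventually_ge_atTop T₀, eventually_gt_atTop 0,
    hC.eventually (gt_mem_nhds (half_pos hε))] with T hT hT0 hCT
  have hint : ∀ a b, 0 ≤ a → 0 ≤ b → IntervalIntegrable (fun t => f t - L) volume a b :=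
    fun a b ha hb => ((hf a ha).symm.trans (hf b hb)).sub intervalIntegrable_const
  have htail : ‖∫ t in T₀..T, (f t - L)‖ ≤ ε / 2 * T := by
    refine (intervalIntegral.norm_integral_le_of_norm_le_const (C := ε / 2)
      fun t ht => ?_).trans ?_
    · rw [uIoc_of_le hT] at ht
      simpa [dist_eq_norm] using (hT₀ t ht.1.le).2
    · rw [abs_of_nonneg (sub_nonneg.2 hT)]
      nlinarith
  have hsplit : ‖∫ t in (0:ℝ)..T, (f t - L)‖ ≤ C + ε / 2 * T := by
    rw [← integral_add_adjacent_intervals (hint 0 T₀ le_rfl hT₀0) (hint T₀ T hT₀0 hT0.le)]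
    exact (norm_add_le _ _).trans (add_le_add_right htail C)
  calc dist (T⁻¹ • ∫ t in (0:ℝ)..T, f t) L
      = T⁻¹ * ‖∫ t in (0:ℝ)..T, (f t - L)‖ := by
        rw [dist_eq_norm, integral_sub (hf T hT0.le) intervalIntegrable_const,
          intervalIntegral.integral_const, sub_zero, ← norm_smul_of_nonneg (inv_nonneg.2 hT0.le),
          smul_sub, smul_smul, inv_mul_cancel₀ hT0.ne', one_smul]
    _ ≤ T⁻¹ * (C + ε / 2 * T) := by gcongr
    _ = T⁻¹ * C + ε / 2 := by field_simp
    _ < ε := by linarith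

theorem sk_integral_mul_amplitude_eq {P : ℝ} {lu ld ld' g g' A : ℝ → ℝ}
    (hlu : ContinuousOn lu (Ici 0))
    (hld : ∀ t ∈ Ici (0:ℝ), HasDerivWithinAt ld (ld' t) (Ici 0) t)
    (hldne : ∀ t ∈ Ici (0:ℝ), ld t ≠ 0)
    (hg : ∀ t ∈ Ici (0:ℝ), HasDerivWithinAt g (g' t) (Ici 0) t) (hg0 : g 0 = 1 / √2)
    (hode : ∀ t ∈ Ici (0:ℝ), g' t = -P * g t ^ 3 + (P / √2) * g t ^ 2 - (ld' t / ld t) * g t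
        + (ld' t + lu t) / (√2 * ld t))
    (hA : ∀ t ∈ Ici (0:ℝ), HasDerivWithinAt A (P * g t ^ 2 * A t) (Ici 0) t)
    {t : ℝ} (ht : 0 ≤ t) :
    ∫ s in (0:ℝ)..t, lu s * A s = ld t * ((√2 * g t - 1) * A t) := by
  have hluA : ContinuousOn (fun s => lu s * A s) (Ici 0) :=
    hlu.mul fun s hs => (hA s hs).continuousWithinAt
  have hrhs : ∀ s ∈ Ici (0:ℝ), HasDerivWithinAt (fun s => ld s * ((√2 * g s - 1) * A s))
      (lu s * A s) (Ici 0) s := by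
    intro s hs
    refine ((hld s hs).mul ((((hg s hs).const_mul √2).sub_const 1).mul (hA s hs))).congr_deriv ?_
    rw [hode s hs, Pi.mul_apply]
    field_simp [hldne s hs]
    ring
  refine eq_of_has_deriv_right_eq
    (fun s hs => ((hluA.hasDerivWithinAt_integral_Ici hs.1).mono (Ici_subset_Ici.2 hs.1)))
    (fun s hs => ((hrhs s hs.1).mono (Ici_subset_Ici.2 hs.1)))
    (fun s hs => (hluA.hasDerivWithinAt_integral_Ici hs.1).continuousWithinAt.mono
      Icc_subset_Ici_self)
    (fun s hs => (hrhs s hs.1).continuousWithinAt.mono Icc_subset_Ici_self)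
    ?_ t ⟨ht, le_rfl⟩
  simp [hg0]

theorem sk_sq_div_one_add_integral_sq {P : ℝ} {g A H : ℝ → ℝ} (hP : P ≠ 0)
    (hg : ContinuousOn g (Ici 0))
    (hA : ∀ t ∈ Ici (0:ℝ), HasDerivWithinAt A (P * g t ^ 2 * A t) (Ici 0) t)
    (hA0 : A 0 ^ 2 = P) (hH : ∀ t ∈ Ici (0:ℝ), H t = √2 * g t * A t) {t : ℝ} (ht : 0 ≤ t)
    (hAt : A t ≠ 0) :
    H t ^ 2 / (1 + ∫ s in (0:ℝ)..t, H s ^ 2) = 2 * (P * g t ^ 2) := by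
  have h2 : √2 ^ 2 = 2 := Real.sq_sqrt zero_le_two
  have hA2 : ∀ s ∈ Ici (0:ℝ), HasDerivWithinAt (fun s => A s ^ 2) (P * H s ^ 2) (Ici 0) s := by
    intro s hs
    refine ((hA s hs).pow 2).congr_deriv ?_
    rw [hH s hs]
    linear_combination (-P * g s ^ 2 * A s ^ 2) * h2
  have hHc : ContinuousOn (fun s => P * H s ^ 2) (Icc 0 t) := by
    have hc : ContinuousOn (fun s => P * (√2 * g s * A s) ^ 2) (Ici 0) :=
      continuousOn_const.mul (((continuousOn_const.mul hg).mul fun s hs =>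
        (hA s hs).continuousWithinAt).pow 2)
    exact (hc.mono Icc_subset_Ici_self).congr fun s hs => by simp only [hH s hs.1]
  have hFTC : ∫ s in (0:ℝ)..t, P * H s ^ 2 = A t ^ 2 - A 0 ^ 2 :=
    integral_eq_sub_of_hasDeriv_right_of_le ht
      (fun s hs => (hA2 s hs.1).continuousWithinAt.mono Icc_subset_Ici_self)
      (fun s hs => (hA2 s hs.1.le).mono (Ioi_subset_Ici hs.1.le))
      (hHc.intervalIntegrable_of_Icc ht)
  rw [intervalIntegral.integral_const_mul, hA0] at hFTC
  have hden : 1 + ∫ s in (0:ℝ)..t, H s ^ 2 = A t ^ 2 / P := by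
    field_simp; linarith
  rw [hden, hH t ht]
  field_simp [hAt]
  linear_combination g t ^ 2 * h2

theorem sk_mutual_information_rate_general (P : ℝ) (hP : 0 < P) (lu ld ld' : ℝ → ℝ)
    (hlu : ContinuousOn lu (Set.Ici (0:ℝ)))
    (hld : ∀ t ∈ Set.Ici (0:ℝ), HasDerivWithinAt ld (ld' t) (Set.Ici (0:ℝ)) t)
    (hldne : ∀ t ∈ Set.Ici (0:ℝ), ld t ≠ 0)
    (g : ℝ → ℝ) (hg : ContDiffOn ℝ 1 g (Set.Ici (0:ℝ))) (hg0 : g 0 = 1 / Real.sqrt 2)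
    (hode : ∀ t ∈ Set.Ici (0:ℝ), derivWithin g (Set.Ici (0:ℝ)) t =
      -P * g t ^ 3 + (P / Real.sqrt 2) * g t ^ 2 - (ld' t / ld t) * g t
        + (ld' t + lu t) / (Real.sqrt 2 * ld t))
    (A : ℝ → ℝ)
    (hA : ∀ t, A t = Real.sqrt P * Real.exp (∫ s in (0:ℝ)..t, P * g s ^ 2))
    (H : ℝ → ℝ)
    (hH : ∀ t, H t = A t + (1 / ld t) * ∫ s in (0:ℝ)..t, lu s * A s)
    (r : ℝ) (hr : Filter.Tendsto g Filter.atTop (nhds r)) :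
    Filter.Tendsto
      (fun T : ℝ => (1 / (2 * T)) *
        ∫ t in (0:ℝ)..T, H t ^ 2 / (1 + ∫ s in (0:ℝ)..t, H s ^ 2))
      Filter.atTop (nhds (P * r ^ 2)) := by
  have hgd : ∀ t ∈ Ici (0:ℝ), HasDerivWithinAt g (derivWithin g (Ici 0) t) (Ici 0) t :=
    fun t ht => ((hg.differentiableOn one_ne_zero) t ht).hasDerivWithinAt
  have hPg : ContinuousOn (fun t => P * g t ^ 2) (Ici 0) :=
    continuousOn_const.mul (hg.continuousOn.pow 2)
  have hA' : ∀ t ∈ Ici (0:ℝ), HasDerivWithinAt A (P * g t ^ 2 * A t) (Ici 0) t := by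
    intro t ht
    rw [funext hA]
    exact ((hPg.hasDerivWithinAt_integral_Ici ht).exp.const_mul √P).congr_deriv (by ring)
  have hHA : ∀ t ∈ Ici (0:ℝ), H t = √2 * g t * A t := fun t ht => by
    rw [hH, sk_integral_mul_amplitude_eq hlu hld hldne hgd hg0 hode hA' ht]
    field_simp [hldne t ht]
    ring
  have hratio : ∀ t ∈ Ici (0:ℝ),
      H t ^ 2 / (1 + ∫ s in (0:ℝ)..t, H s ^ 2) = 2 * (P * g t ^ 2) := fun t ht =>
    sk_sq_div_one_add_integral_sq hP.ne' hg.continuousOn hA'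
      (by simp [hA, Real.sq_sqrt hP.le]) hHA ht (by rw [hA]; positivity)
  have hmean := ((hr.pow 2).const_mul P).cesaro_intervalIntegral
    fun T hT => (hPg.mono (uIcc_of_le hT ▸ Icc_subset_Ici_self)).intervalIntegrable
  refine hmean.congr' ?_
  filter_upwards [eventually_gt_atTop 0] with T hT
  rw [integral_congr fun t ht => hratio t (uIcc_of_le hT.le ▸ ht).1,
    intervalIntegral.integral_const_mul 2 (fun t => P * g t ^ 2), smul_eq_mul]
  field_simp

/-- If g(t) → r as t → ∞, then
(1/(2T)) ∫₀ᵀ H(t)²/(1 + ∫₀ᵗ H(s)² ds) dt → P·r² as T → ∞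
(the analytic core of Ī_SK(Θ;Y) = P·r_P²). -/
theorem sk_mutual_information_rate (P : ℝ) (hP : 0 < P) (lu ld ld' : ℝ → ℝ)
    (hlu : ContinuousOn lu (Set.Ici (0:ℝ)))
    (hld : ∀ t ∈ Set.Ici (0:ℝ), HasDerivWithinAt ld (ld' t) (Set.Ici (0:ℝ)) t)
    (hld' : ContinuousOn ld' (Set.Ici (0:ℝ)))
    (hldne : ∀ t ∈ Set.Ici (0:ℝ), ld t ≠ 0)
    (g : ℝ → ℝ) (hg : ContDiffOn ℝ 1 g (Set.Ici (0:ℝ))) (hg0 : g 0 = 1 / Real.sqrt 2)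
    (hode : ∀ t ∈ Set.Ici (0:ℝ), derivWithin g (Set.Ici (0:ℝ)) t =
      -P * g t ^ 3 + (P / Real.sqrt 2) * g t ^ 2 - (ld' t / ld t) * g t
        + (ld' t + lu t) / (Real.sqrt 2 * ld t))
    (A : ℝ → ℝ)
    (hA : ∀ t, A t = Real.sqrt P * Real.exp (∫ s in (0:ℝ)..t, P * g s ^ 2))
    (H : ℝ → ℝ)
    (hH : ∀ t, H t = A t + (1 / ld t) * ∫ s in (0:ℝ)..t, lu s * A s)
    (r : ℝ) (hr : Filter.Tendsto g Filter.atTop (nhds r)) :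
    Filter.Tendsto
      (fun T : ℝ => (1 / (2 * T)) *
        ∫ t in (0:ℝ)..T, H t ^ 2 / (1 + ∫ s in (0:ℝ)..t, H s ^ 2))
      Filter.atTop (nhds (P * r ^ 2)) :=
  sk_mutual_information_rate_general P hP lu ld ld' hlu hld hldne g hg hg0 hode A hA H hH r hr
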